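/- arXiv:1710.06898 — 7 statements merged into one kernel-verified Lean document; each statement's English description precedes it below -/
import Mathlib

section
/- Let G be a finite simple graph, S a subgraph of G, and L a list assignment for G such that L(u) is nonempty for every vertex u of G and G is S-critical with respect to L. Let A and B be subgraphs of G such that A ∪ B = G, S ⊆ A, and B ≠ A ∩ B. Then B is (A ∩ B)-critical with respect to L. -/
/-- An `L`-coloring of the subgraph `H` of `G`: a function assigning colors such that every
vertex of `H` gets a color from its list and adjacent vertices of `H` get distinct colors. -/
def IsLColoring {V α : Type*} (G : SimpleGraph V) (L : V → Finset α) (H : G.Subgraph)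
    (φ : V → α) : Prop :=
  (∀ v ∈ H.verts, φ v ∈ L v) ∧ ∀ ⦃u v : V⦄, H.Adj u v → φ u ≠ φ v

/-- An `L`-coloring `φ` of the subgraph `S` extends to the subgraph `H` (with `S ⊆ H`) if there
is an `L`-coloring of `H` agreeing with `φ` on the vertices of `S`. -/
def ExtendsToLColoring {V α : Type*} (G : SimpleGraph V) (L : V → Finset α) (S H : G.Subgraph)
    (φ : V → α) : Prop :=
  ∃ ψ : V → α, IsLColoring G L H ψ ∧ ∀ v ∈ S.verts, ψ v = φ v

/-- The subgraph `K` of `G` is `S`-critical with respect to `L`: for every proper subgraph `H`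
of `K` with `S ⊆ H`, some `L`-coloring of `S` extends to `H` but not to `K`. -/
def IsCriticalSub {V α : Type*} (G : SimpleGraph V) (L : V → Finset α) (S K : G.Subgraph) :
    Prop :=
  ∀ H : G.Subgraph, S ≤ H → H < K →
    ∃ φ : V → α, IsLColoring G L S φ ∧ ExtendsToLColoring G L S H φ ∧
      ¬ ExtendsToLColoring G L S K φ


lemma isLColoring_mono {V α : Type*} {G : SimpleGraph V} {L : V → Finset α} {H K : G.Subgraph}
    (h : H ≤ K) {φ : V → α} (hφ : IsLColoring G L K φ) : IsLColoring G L H φ :=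
  ⟨fun v hv => hφ.1 v (h.1 hv), fun u v huv => hφ.2 (h.2 huv)⟩

/-- if `G` is `S`-critical, `A ∪ B = G`, `S ⊆ A` and `B ≠ A ∩ B`,
then `B` is `(A ∩ B)`-critical. -/
theorem statement_0 {V α : Type*} [Fintype V] (G : SimpleGraph V) (L : V → Finset α)
    (S A B : G.Subgraph)
    (hL : ∀ u : V, (L u).Nonempty)
    (hcrit : IsCriticalSub G L S ⊤)
    (hSA : S ≤ A) (hAB : A ⊔ B = ⊤) (hne : B ≠ A ⊓ B) :
    IsCriticalSub G L (A ⊓ B) B := by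
  classical
  intro H hABH hHB
  have hAH : A ⊔ H < ⊤ := by
    rw [lt_top_iff_ne_top]
    intro h
    have hB : B ≤ A ⊔ H := h ▸ le_top
    have hBH : B ≤ H := by
      calc B = B ⊓ (A ⊔ H) := (inf_eq_left.mpr hB).symm
      _ = (B ⊓ A) ⊔ (B ⊓ H) := inf_sup_left _ _ _
      _ ≤ H := sup_le (by rw [inf_comm]; exact hABH) inf_le_right
    exact absurd (lt_of_lt_of_le hHB hBH) (lt_irrefl H)
  obtain ⟨φ, hφS, ⟨ψ, hψ, hψφ⟩, hnot⟩ := hcrit (A ⊔ H) (le_trans hSA le_sup_left) hAH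
  have hABle : A ⊓ B ≤ A ⊔ H := le_trans inf_le_left le_sup_left
  refine ⟨ψ, isLColoring_mono hABle hψ, ⟨ψ, isLColoring_mono le_sup_right hψ,
    fun v _ => rfl⟩, ?_⟩
  rintro ⟨χ, hχ, hχψ⟩
  apply hnot
  refine ⟨fun v => if v ∈ B.verts then χ v else ψ v, ⟨?_, ?_⟩, ?_⟩
  · intro v _
    by_cases hv : v ∈ B.verts
    · simpa [if_pos hv] using hχ.1 v hv
    · have hvA : v ∈ A.verts := by
        have : v ∈ (A ⊔ B).verts := by rw [hAB]; trivial
        rcases this with h | h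
        · exact h
        · exact absurd h hv
      simpa [if_neg hv] using hψ.1 v (Or.inl hvA)
  · intro u v huv
    have hadj : A.Adj u v ∨ B.Adj u v := by
      have : (A ⊔ B).Adj u v := by rw [hAB]; exact huv
      exact this
    have hne' : ∀ x y : V, A.Adj x y → ψ x ≠ ψ y := fun x y hxy =>
      hψ.2 (SimpleGraph.Subgraph.sup_adj.mpr (Or.inl hxy))
    rcases hadj with hA | hB
    · have huA : u ∈ A.verts := hA.fst_mem
      have hvA : v ∈ A.verts := hA.snd_mem
      by_cases hu : u ∈ B.verts <;> by_cases hv : v ∈ B.verts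
      · simp only [if_pos hu, if_pos hv]
        rw [hχψ u ⟨huA, hu⟩, hχψ v ⟨hvA, hv⟩]; exact hne' u v hA
      · simp only [if_pos hu, if_neg hv]
        rw [hχψ u ⟨huA, hu⟩]; exact hne' u v hA
      · simp only [if_neg hu, if_pos hv]
        rw [hχψ v ⟨hvA, hv⟩]; exact hne' u v hA
      · simp only [if_neg hu, if_neg hv]
        exact hne' u v hA
    · have hu : u ∈ B.verts := hB.fst_mem
      have hv : v ∈ B.verts := hB.snd_mem
      simp only [if_pos hu, if_pos hv]
      exact hχ.2 hB
  · intro v hvS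
    have hvA : v ∈ A.verts := hSA.1 hvS
    by_cases hv : v ∈ B.verts
    · simp only [if_pos hv]
      rw [hχψ v ⟨hvA, hv⟩]
      exact hψφ v hvS
    · simp only [if_neg hv]
      exact hψφ v hvS
end

section
/- Let G be a finite simple graph, S a subgraph of G, and L a list assignment for G. If there exists an L-coloring of S that does not extend to an L-coloring of G, then there exists a subgraph H of G with S ⊆ H and H ≠ S such that H is S-critical with respect to L. -/
/-! Among the finitely many subgraphs `K ⊇ S` to which `φ` does not extend, take a minimal one.
Then `φ` itself witnesses criticality: it extends to every proper subgraph `H ⊇ S` of `K` by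
minimality, but not to `K`. It does not extend to `S` itself, so `K ≠ S`. -/

theorem extendsToLColoring_self {V α : Type*} {G : SimpleGraph V} {L : V → Finset α}
    {S : G.Subgraph} {φ : V → α} (hφ : IsLColoring G L S φ) :
    ExtendsToLColoring G L S S φ :=
  ⟨φ, hφ, fun _ _ => rfl⟩

theorem isCriticalSub_of_minimal_not_extendsToLColoring {V α : Type*} {G : SimpleGraph V}
    {L : V → Finset α} {S K : G.Subgraph} {φ : V → α} (hφ : IsLColoring G L S φ)
    (hK : Minimal (fun H => S ≤ H ∧ ¬ ExtendsToLColoring G L S H φ) K) :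
    IsCriticalSub G L S K := by
  intro H hSH hHK
  have hext : ExtendsToLColoring G L S H φ := by
    by_contra hnot
    exact hK.not_prop_of_lt hHK ⟨hSH, hnot⟩
  exact ⟨φ, hφ, hext, hK.prop.2⟩

/-- if some `L`-coloring of `S` does not extend to `G`, then `G` contains a
subgraph `H ⊇ S` with `H ≠ S` that is `S`-critical with respect to `L`. -/
theorem statement_1 {V α : Type*} [Fintype V] (G : SimpleGraph V) (L : V → Finset α)
    (S : G.Subgraph) (φ : V → α)
    (hφ : IsLColoring G L S φ)
    (hnot : ¬ ExtendsToLColoring G L S ⊤ φ) :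
    ∃ H : G.Subgraph, S ≤ H ∧ H ≠ S ∧ IsCriticalSub G L S H := by
  obtain ⟨K, -, hK⟩ := exists_minimal_le_of_wellFoundedLT
    (fun H => S ≤ H ∧ ¬ ExtendsToLColoring G L S H φ) ⊤ ⟨le_top, hnot⟩
  refine ⟨K, hK.prop.1, ?_, isCriticalSub_of_minimal_not_extendsToLColoring hφ hK⟩
  rintro rfl
  exact hK.prop.2 (extendsToLColoring_self hφ)
end

section
/- Let G be a finite simple graph, S a subgraph of G, and L a list assignment for G such that L(u) is nonempty for every vertex u of G and G is S-critical with respect to L. Let H be a subgraph of G such that S is a proper subgraph of H, every edge in E(G) \ E(H) has no endpoint in V(H) \ V(S), and every edge of H with both endpoints in V(S) belongs to S. Then H is S-critical with respect to L. -/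
/-!
Given `S ≤ H' < H`, apply the criticality of `G` to `K = H' ∪ R`, where `R` is `G` with the
edges of `H` and the vertices of `H - S` removed. `K` is a proper subgraph of `G`, so some
coloring `φ` of `S` extends to `K` (hence to `H'`) but not to `G`. If `φ` also extended to `H`,
the coloring of `H` and the coloring of `R` would agree on `V(S)`, and since every edge of `G`
outside `H` lies in `R`, together they would color `G`.
-/

open SimpleGraph.Subgraph

section

variable {V α : Type*} {G : SimpleGraph V} {L : V → Finset α}

namespace SimpleGraph.Subgraph

def exterior (H S : G.Subgraph) : G.Subgraph :=
  ((⊤ : G.Subgraph).deleteEdges H.edgeSet).deleteVerts (H.verts \ S.verts)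

variable {S H H' : G.Subgraph}

theorem exterior_verts : (H.exterior S).verts = (H.verts \ S.verts)ᶜ := by
  simp [exterior, Set.compl_eq_univ_sdiff]

theorem exterior_adj {u v : V} : (H.exterior S).Adj u v ↔
    u ∉ H.verts \ S.verts ∧ v ∉ H.verts \ S.verts ∧ G.Adj u v ∧ ¬ H.Adj u v := by
  simp [exterior]

theorem sup_exterior_lt_top (hSH' : S ≤ H') (hH'H : H' < H) : H' ⊔ H.exterior S < ⊤ := by
  refine lt_top_iff_ne_top.mpr fun htop => hH'H.not_ge ⟨fun v hvH => ?_, fun u v huv => ?_⟩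
  · have hv : v ∈ (H' ⊔ H.exterior S).verts := htop ▸ trivial
    rw [verts_sup, exterior_verts] at hv
    by_contra hvH'
    exact hv.elim hvH' fun hv => hv ⟨hvH, fun hvS => hvH' (hSH'.1 hvS)⟩
  · have h : (H' ⊔ H.exterior S).Adj u v := htop ▸ huv.adj_sub
    rw [Subgraph.sup_adj, exterior_adj] at h
    exact h.resolve_right fun h => h.2.2.2 huv

end SimpleGraph.Subgraph

theorem IsLColoring.mono {H K : G.Subgraph} {ψ : V → α} (hHK : H ≤ K)
    (hψ : IsLColoring G L K ψ) : IsLColoring G L H ψ :=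
  ⟨fun v hv => hψ.1 v (hHK.1 hv), fun _ _ huv => hψ.2 (hHK.2 huv)⟩

theorem ExtendsToLColoring.mono {S H K : G.Subgraph} {φ : V → α} (hHK : H ≤ K)
    (hφ : ExtendsToLColoring G L S K φ) : ExtendsToLColoring G L S H φ :=
  let ⟨ψ, hψ, hψφ⟩ := hφ
  ⟨ψ, hψ.mono hHK, hψφ⟩

theorem extendsToLColoring_top_of_exterior {S H : G.Subgraph} {φ : V → α}
    (hedges : ∀ u v : V, G.Adj u v → ¬ H.Adj u v →
      u ∉ H.verts \ S.verts ∧ v ∉ H.verts \ S.verts)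
    (hSH : S.verts ⊆ H.verts) (hH : ExtendsToLColoring G L S H φ)
    (hR : ExtendsToLColoring G L S (H.exterior S) φ) : ExtendsToLColoring G L S ⊤ φ := by
  classical
  obtain ⟨θ, ⟨hθL, hθadj⟩, hθφ⟩ := hH
  obtain ⟨ψ, ⟨hψL, hψadj⟩, hψφ⟩ := hR
  have hglue : ∀ w ∉ H.verts \ S.verts, H.verts.piecewise θ ψ w = ψ w := by
    intro w hw
    by_cases hwH : w ∈ H.verts
    · have hwS : w ∈ S.verts := by_contra fun hwS => hw ⟨hwH, hwS⟩
      rw [Set.piecewise_eq_of_mem _ _ _ hwH, hθφ w hwS, hψφ w hwS]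
    · exact Set.piecewise_eq_of_notMem _ _ _ hwH
  refine ⟨H.verts.piecewise θ ψ, ⟨fun v _ => ?_, fun u v huv => ?_⟩, fun v hv => ?_⟩
  · by_cases hvH : v ∈ H.verts
    · simpa [hvH] using hθL v hvH
    · simpa [hvH] using hψL v (by simp [exterior_verts, hvH])
  · have huv : G.Adj u v := top_adj.mp huv
    by_cases hH : H.Adj u v
    · simpa [hH.fst_mem, hH.snd_mem] using hθadj hH
    · obtain ⟨hu, hv⟩ := hedges u v huv hH
      rw [hglue u hu, hglue v hv]
      exact hψadj (exterior_adj.mpr ⟨hu, hv, huv, hH⟩)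
  · simpa [hSH hv] using hθφ v hv

end

theorem statement_2_general {V α : Type*} (G : SimpleGraph V) (L : V → Finset α)
    (S H : G.Subgraph)
    (hcrit : IsCriticalSub G L S ⊤)
    (hedges : ∀ u v : V, G.Adj u v → ¬ H.Adj u v →
      u ∉ H.verts \ S.verts ∧ v ∉ H.verts \ S.verts) :
    IsCriticalSub G L S H := by
  intro H' hSH' hH'H
  obtain ⟨φ, hφ, hext, hnot⟩ :=
    hcrit (H' ⊔ H.exterior S) (hSH'.trans le_sup_left) (sup_exterior_lt_top hSH' hH'H)
  refine ⟨φ, hφ, hext.mono le_sup_left, fun hH => hnot ?_⟩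
  exact extendsToLColoring_top_of_exterior hedges (hSH'.1.trans hH'H.le.1) hH
    (hext.mono le_sup_right)

/-- if `G` is `S`-critical, `S` is a proper subgraph of `H`, no edge of
`E(G) \ E(H)` has an endpoint in `V(H) \ V(S)`, and every edge of `H` with both endpoints in
`V(S)` belongs to `S`, then `H` is `S`-critical with respect to `L`. -/
theorem statement_2 {V α : Type*} [Fintype V] (G : SimpleGraph V) (L : V → Finset α)
    (S H : G.Subgraph)
    (hL : ∀ u : V, (L u).Nonempty)
    (hcrit : IsCriticalSub G L S ⊤)
    (hSH : S < H)
    (hedges : ∀ u v : V, G.Adj u v → ¬ H.Adj u v →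
      u ∉ H.verts \ S.verts ∧ v ∉ H.verts \ S.verts)
    (hinduced : ∀ u v : V, H.Adj u v → u ∈ S.verts → v ∈ S.verts → S.Adj u v) :
    IsCriticalSub G L S H :=
  statement_2_general G L S H hcrit hedges
end

section
/- Let G be a finite simple graph and let S ⊆ H ⊆ G be subgraphs. Then q(G,S) ≤ q(H,S) + q(G,H), where q(G,S) = Σ_{u ∈ V(S)} deg_{G−E(S)}(u), q(H,S) = Σ_{u ∈ V(S)} deg_{H−E(S)}(u), and q(G,H) = Σ_{u ∈ V(H)} deg_{G−E(H)}(u). -/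
/-- Number of vertices of the subgraph `K` not in the subgraph `S`. -/
noncomputable def vCount {V : Type*} {G : SimpleGraph V} (K S : G.Subgraph) : ℕ :=
  (K.verts \ S.verts).ncard

/-- Number of edges of the subgraph `K` not in the subgraph `S`. -/
noncomputable def eCount {V : Type*} {G : SimpleGraph V} (K S : G.Subgraph) : ℕ :=
  (K.edgeSet \ S.edgeSet).ncard

/-- Number of connected components of the subgraph `K`. -/
noncomputable def nComp {V : Type*} {G : SimpleGraph V} (K : G.Subgraph) : ℕ :=
  Nat.card K.coe.ConnectedComponent

/-- Degree of the vertex `u` in the graph obtained from `K` by deleting the edges of `S`. -/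
noncomputable def degDel {V : Type*} {G : SimpleGraph V} (K S : G.Subgraph) (u : V) : ℕ :=
  (K.neighborSet u \ S.neighborSet u).ncard

/-- `q(K,S)`: the sum over vertices `u` of `S` of the degree of `u` in `K − E(S)`. -/
noncomputable def qCount {V : Type*} {G : SimpleGraph V} (K S : G.Subgraph) : ℕ :=
  ∑ᶠ u ∈ S.verts, degDel K S u

/-- The deficiency `def(K,S) = 3·e(K,S) − 5·v(K,S) + 10·(c(S) − c(K))`. -/
noncomputable def defic {V : Type*} {G : SimpleGraph V} (K S : G.Subgraph) : ℝ :=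
  3 * (eCount K S : ℝ) - 5 * (vCount K S : ℝ) + 10 * ((nComp S : ℝ) - (nComp K : ℝ))

/-! An edge at `u` of `K` outside `S` lies either in `H` (and then in `H − E(S)`) or in
`K − E(H)`; summing over `V(S) ⊆ V(H)` and extending the second sum to `V(H)` gives the bound. -/

section

variable {V : Type*} {G : SimpleGraph V}

lemma degDel_le_degDel_add_degDel [Finite V] (K H S : G.Subgraph) (u : V) :
    degDel K S u ≤ degDel H S u + degDel K H u :=
  calc degDel K S u
      ≤ ((H.neighborSet u \ S.neighborSet u) ∪ (K.neighborSet u \ H.neighborSet u)).ncard :=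
        Set.ncard_le_ncard fun x ⟨hK, hS⟩ ↦ (em (x ∈ H.neighborSet u)).imp (⟨·, hS⟩) (⟨hK, ·⟩)
    _ ≤ degDel H S u + degDel K H u := Set.ncard_union_le _ _

theorem qCount_le_qCount_add_qCount [Finite V] (K : G.Subgraph) {S H : G.Subgraph}
    (hSH : S.verts ⊆ H.verts) : qCount K S ≤ qCount H S + qCount K H := by
  have hS := S.verts.toFinite
  have hH := H.verts.toFinite
  simp only [qCount, finsum_mem_eq_finite_toFinset_sum _ hS, finsum_mem_eq_finite_toFinset_sum _ hH]
  calc ∑ u ∈ hS.toFinset, degDel K S u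
      ≤ ∑ u ∈ hS.toFinset, (degDel H S u + degDel K H u) :=
        Finset.sum_le_sum fun u _ ↦ degDel_le_degDel_add_degDel K H S u
    _ = ∑ u ∈ hS.toFinset, degDel H S u + ∑ u ∈ hS.toFinset, degDel K H u :=
        Finset.sum_add_distrib
    _ ≤ ∑ u ∈ hS.toFinset, degDel H S u + ∑ u ∈ hH.toFinset, degDel K H u :=
        add_le_add_right (Finset.sum_le_sum_of_subset (hS.toFinset_subset_toFinset.2 hSH)) _

end

/-- for subgraphs `S ⊆ H ⊆ G`, `q(G,S) ≤ q(H,S) + q(G,H)`. -/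
theorem statement_6 {V : Type*} [Fintype V] (G : SimpleGraph V) (S H : G.Subgraph)
    (hSH : S ≤ H) :
    qCount (⊤ : G.Subgraph) S ≤ qCount H S + qCount (⊤ : G.Subgraph) H :=
  qCount_le_qCount_add_qCount ⊤ hSH.1
end

section
/- Let ε, α > 0 be real numbers, let G be a finite simple graph, and let S ⊆ H ⊆ G be subgraphs. Then s(G,S) ≤ s(H,S) + s(G,H), where s(G,S) = ε·|V(G) \ V(S)| + α·q(G,S), s(H,S) = ε·|V(H) \ V(S)| + α·q(H,S), and s(G,H) = ε·|V(G) \ V(H)| + α·q(G,H). -/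
/-- `s(K,S) = ε·v(K,S) + α·q(K,S)`. -/
noncomputable def sCount {V : Type*} {G : SimpleGraph V} (ε α : ℝ) (K S : G.Subgraph) : ℝ :=
  ε * (vCount K S : ℝ) + α * (qCount K S : ℝ)


lemma aux_ncard_tri {V : Type*} [Fintype V] (s t r : Set V) :
    (s \ r).ncard ≤ (t \ r).ncard + (s \ t).ncard := by
  have hsub : s \ r ⊆ (t \ r) ∪ (s \ t) := by
    intro x hx
    by_cases h : x ∈ t
    · exact Or.inl ⟨h, hx.2⟩
    · exact Or.inr ⟨hx.1, h⟩
  calc (s \ r).ncard ≤ ((t \ r) ∪ (s \ t)).ncard :=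
        Set.ncard_le_ncard hsub (Set.toFinite _)
    _ ≤ (t \ r).ncard + (s \ t).ncard := Set.ncard_union_le _ _

lemma aux_finsum_eq {V : Type*} [Fintype V] (s : Set V) (f : V → ℕ) :
    ∑ᶠ u ∈ s, f u = ∑ u ∈ (Set.toFinite s).toFinset, f u := by
  rw [← Set.Finite.coe_toFinset (Set.toFinite s), finsum_mem_coe_finset]
  refine Finset.sum_congr ?_ fun _ _ => rfl
  ext x; simp

/-- for `ε, α > 0` and subgraphs `S ⊆ H ⊆ G`, `s(G,S) ≤ s(H,S) + s(G,H)`. -/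
theorem statement_7 {V : Type*} [Fintype V] (ε α : ℝ) (hε : 0 < ε) (hα : 0 < α)
    (G : SimpleGraph V) (S H : G.Subgraph) (hSH : S ≤ H) :
    sCount ε α (⊤ : G.Subgraph) S ≤ sCount ε α H S + sCount ε α (⊤ : G.Subgraph) H := by
  have hverts : H.verts ⊆ (⊤ : G.Subgraph).verts := by simp
  have hSHv : S.verts ⊆ H.verts := hSH.1
  -- vertex inequality
  have hv : (vCount (⊤ : G.Subgraph) S : ℝ) ≤ (vCount H S : ℝ) + (vCount (⊤ : G.Subgraph) H : ℝ) := by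
    have := aux_ncard_tri (⊤ : G.Subgraph).verts H.verts S.verts
    unfold vCount
    exact_mod_cast this
  -- q inequality
  have hq : (qCount (⊤ : G.Subgraph) S : ℝ) ≤ (qCount H S : ℝ) + (qCount (⊤ : G.Subgraph) H : ℝ) := by
    have key : qCount (⊤ : G.Subgraph) S ≤ qCount H S + qCount (⊤ : G.Subgraph) H := by
      unfold qCount
      rw [aux_finsum_eq, aux_finsum_eq, aux_finsum_eq]
      have h1 : ∑ u ∈ (Set.toFinite S.verts).toFinset, degDel (⊤ : G.Subgraph) S u
          ≤ ∑ u ∈ (Set.toFinite S.verts).toFinset, (degDel H S u + degDel (⊤ : G.Subgraph) H u) := by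
        apply Finset.sum_le_sum
        intro u _
        exact aux_ncard_tri _ _ _
      rw [Finset.sum_add_distrib] at h1
      refine h1.trans (Nat.add_le_add_left ?_ _)
      apply Finset.sum_le_sum_of_subset
      intro x hx
      simp only [Set.Finite.mem_toFinset] at *
      exact hSHv hx
    exact_mod_cast key
  unfold sCount
  nlinarith [hv, hq]
end

section
/- Let ε, α > 0 be real numbers, let G be a finite simple graph, and let S ⊆ H ⊆ G be subgraphs. Then d(G,S) ≥ d_G(H,S) + d(G,H), where d(·,·) = def(·,·) − s(·,·) and d_G(H,S) = d(H,S) + α·q_G(H,S). -/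
/-- `d(K,S) = def(K,S) − s(K,S)`. -/
noncomputable def dCount {V : Type*} {G : SimpleGraph V} (ε α : ℝ) (K S : G.Subgraph) : ℝ :=
  defic K S - sCount ε α K S

/-- `q_G(H,S)`: the sum over vertices `u ∈ V(H) \ V(S)` of the degree of `u` in `G − E(H)`. -/
noncomputable def qOut {V : Type*} {G : SimpleGraph V} (H S : G.Subgraph) : ℕ :=
  ∑ᶠ u ∈ H.verts \ S.verts, degDel (⊤ : G.Subgraph) H u

/-- `d_G(H,S) = d(H,S) + α·q_G(H,S)`. -/
noncomputable def dOut {V : Type*} {G : SimpleGraph V} (ε α : ℝ) (H S : G.Subgraph) : ℝ :=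
  dCount ε α H S + α * (qOut H S : ℝ)

lemma ncard_diff_split {α : Type*} {A B C : Set α} (hAB : A ⊆ B) (hBC : B ⊆ C)
    (hC : C.Finite) : (C \ A).ncard = (C \ B).ncard + (B \ A).ncard := by
  have hsplit : C \ A = (C \ B) ∪ (B \ A) := by
    ext x
    simp only [Set.mem_diff, Set.mem_union]
    constructor
    · rintro ⟨hxC, hxA⟩
      by_cases hxB : x ∈ B
      · exact Or.inr ⟨hxB, hxA⟩
      · exact Or.inl ⟨hxC, hxB⟩
    · rintro (⟨hxC, hxB⟩ | ⟨hxB, hxA⟩)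
      · exact ⟨hxC, fun h => hxB (hAB h)⟩
      · exact ⟨hBC hxB, hxA⟩
  rw [hsplit, Set.ncard_union_eq (by
      rw [Set.disjoint_iff_inter_eq_empty]
      ext x; simp only [Set.mem_inter_iff, Set.mem_diff, Set.mem_empty_iff_false, iff_false]
      tauto)
    (hC.subset Set.diff_subset) ((hC.subset hBC).subset Set.diff_subset)]

/-- for `ε, α > 0` and subgraphs `S ⊆ H ⊆ G`,
`d(G,S) ≥ d_G(H,S) + d(G,H)`. -/
theorem statement_10 {V : Type*} [Fintype V] (ε α : ℝ) (hε : 0 < ε) (hα : 0 < α)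
    (G : SimpleGraph V) (S H : G.Subgraph) (hSH : S ≤ H) :
    dCount ε α (⊤ : G.Subgraph) S ≥ dOut ε α H S + dCount ε α (⊤ : G.Subgraph) H := by
  have hHT : H ≤ (⊤ : G.Subgraph) := le_top
  -- vertex counts
  have hv : vCount (⊤ : G.Subgraph) S = vCount (⊤ : G.Subgraph) H + vCount H S :=
    ncard_diff_split hSH.1 hHT.1 (Set.toFinite _)
  -- edge counts
  have he : eCount (⊤ : G.Subgraph) S = eCount (⊤ : G.Subgraph) H + eCount H S :=
    ncard_diff_split (SimpleGraph.Subgraph.edgeSet_mono hSH)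
      (SimpleGraph.Subgraph.edgeSet_mono hHT) (Set.toFinite _)
  -- degree split at each vertex
  have hdeg : ∀ u : V, degDel (⊤ : G.Subgraph) S u = degDel (⊤ : G.Subgraph) H u + degDel H S u :=
    fun u => ncard_diff_split (SimpleGraph.Subgraph.neighborSet_subset_of_subgraph hSH u)
      (SimpleGraph.Subgraph.neighborSet_subset_of_subgraph hHT u) (Set.toFinite _)
  -- q split
  have hq1 : qCount (⊤ : G.Subgraph) S
      = (∑ᶠ u ∈ S.verts, degDel (⊤ : G.Subgraph) H u) + qCount H S := by
    unfold qCount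
    rw [← finsum_mem_add_distrib (Set.toFinite _)]
    exact finsum_mem_congr rfl fun u _ => hdeg u
  have hq2 : qCount (⊤ : G.Subgraph) H
      = (∑ᶠ u ∈ S.verts, degDel (⊤ : G.Subgraph) H u) + qOut H S := by
    unfold qCount qOut
    have : H.verts = S.verts ∪ (H.verts \ S.verts) := by
      rw [Set.union_diff_cancel hSH.1]
    conv_lhs => rw [this]
    rw [finsum_mem_union Set.disjoint_sdiff_right (Set.toFinite _) (Set.toFinite _)]
  -- now linear arithmetic
  have hq : (qCount (⊤ : G.Subgraph) S : ℝ) + (qOut H S : ℝ)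
      = (qCount H S : ℝ) + (qCount (⊤ : G.Subgraph) H : ℝ) := by
    rw_mod_cast [hq1, hq2]; push_cast; ring
  have hqa : α * (qCount (⊤ : G.Subgraph) S : ℝ) + α * (qOut H S : ℝ)
      = α * (qCount H S : ℝ) + α * (qCount (⊤ : G.Subgraph) H : ℝ) := by
    rw [← mul_add, ← mul_add, hq]
  unfold dOut dCount defic sCount
  rw [hv, he]
  push_cast
  linarith [hqa]
end

section
/- Let ε, α > 0 be real numbers, let G be a finite simple graph, and let S be a subgraph of G. (i) If G = S, then d(G,S) = 0. (ii) If V(G) = V(S) (i.e., v(G,S) = 0), then d(G,S) ≥ (3 − 2α)·e(G,S). (iii) If |V(G) \ V(S)| = 1, the number of connected components of G equals the number of connected components of S, and w is the unique vertex of V(G) \ V(S), then d(G,S) ≥ (3 − 2α)·e(G,S) − 5 + deg_G(w)·α − ε. -/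
open SimpleGraph

lemma sum_degDel {V : Type*} [Fintype V] (G : SimpleGraph V) (S : G.Subgraph) :
    ∑ u : V, degDel (⊤ : G.Subgraph) S u = 2 * eCount (⊤ : G.Subgraph) S := by
  classical
  set H := G.deleteEdges S.edgeSet with hH
  have hns : ∀ u, (⊤ : G.Subgraph).neighborSet u \ S.neighborSet u = H.neighborSet u := by
    intro u
    ext v
    simp [hH, Subgraph.neighborSet_top, SimpleGraph.deleteEdges_adj, Subgraph.mem_neighborSet,
      SimpleGraph.mem_neighborSet, Subgraph.mem_edgeSet]
  have hdeg : ∀ u, degDel (⊤ : G.Subgraph) S u = H.degree u := by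
    intro u
    rw [degDel, hns u, ← SimpleGraph.card_neighborSet_eq_degree,
      Set.ncard_eq_toFinset_card', Set.toFinset_card]
  have hE : eCount (⊤ : G.Subgraph) S = H.edgeFinset.card := by
    rw [eCount, Subgraph.edgeSet_top, ← SimpleGraph.edgeSet_deleteEdges, ← hH]
    simp [SimpleGraph.edgeFinset, Set.ncard_eq_toFinset_card']
  simp_rw [hdeg, hE]
  exact SimpleGraph.sum_degrees_eq_twice_card_edges H

lemma nComp_top_le' {V : Type*} [Fintype V] (G : SimpleGraph V) (S : G.Subgraph)
    (hS : S.verts = Set.univ) : nComp (⊤ : G.Subgraph) ≤ nComp S := by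
  classical
  have hsurj : Function.Surjective
      (SimpleGraph.ConnectedComponent.map (SimpleGraph.Subgraph.inclusion (le_top : S ≤ ⊤))) := by
    intro c
    refine c.ind ?_
    rintro ⟨x, hx⟩
    exact ⟨S.coe.connectedComponentMk ⟨x, hS ▸ Set.mem_univ x⟩, rfl⟩
  exact Nat.card_le_card_of_surjective _ hsurj

/-- for `ε, α > 0` and a subgraph `S` of `G`:
(i) if `G = S` then `d(G,S) = 0`;
(ii) if `V(G) = V(S)` then `d(G,S) ≥ (3 − 2α)·e(G,S)`;
(iii) if `V(G) \ V(S) = {w}` and `c(G) = c(S)`, then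
`d(G,S) ≥ (3 − 2α)·e(G,S) − 5 + deg_G(w)·α − ε`. -/
theorem statement_11 {V : Type*} [Fintype V] (ε α : ℝ) (hε : 0 < ε) (hα : 0 < α)
    (G : SimpleGraph V) (S : G.Subgraph) :
    (S = ⊤ → dCount ε α (⊤ : G.Subgraph) S = 0) ∧
    (S.verts = Set.univ →
      dCount ε α (⊤ : G.Subgraph) S ≥ (3 - 2 * α) * (eCount (⊤ : G.Subgraph) S : ℝ)) ∧
    (∀ w : V, Set.univ \ S.verts = {w} → nComp (⊤ : G.Subgraph) = nComp S →
      dCount ε α (⊤ : G.Subgraph) S ≥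
        (3 - 2 * α) * (eCount (⊤ : G.Subgraph) S : ℝ) - 5
          + ((G.neighborSet w).ncard : ℝ) * α - ε) := by
  classical
  have hsum := sum_degDel G S
  refine ⟨?_, ?_, ?_⟩
  · intro h
    subst h
    have hq : qCount (⊤ : G.Subgraph) (⊤ : G.Subgraph) = 0 := by
      rw [qCount]
      have : ∀ u ∈ (⊤ : G.Subgraph).verts, degDel (⊤ : G.Subgraph) (⊤ : G.Subgraph) u = 0 := by
        intro u _
        simp [degDel]
      rw [finsum_mem_congr rfl this]
      simp
    simp [dCount, defic, sCount, vCount, eCount, hq]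
  · intro hS
    have hv : vCount (⊤ : G.Subgraph) S = 0 := by
      simp [vCount, hS, SimpleGraph.Subgraph.verts_top]
    have hq : qCount (⊤ : G.Subgraph) S = 2 * eCount (⊤ : G.Subgraph) S := by
      rw [qCount, hS, finsum_mem_univ, finsum_eq_sum_of_fintype, hsum]
    have hc : (nComp (⊤ : G.Subgraph) : ℝ) ≤ (nComp S : ℝ) :=
      Nat.cast_le.mpr (nComp_top_le' G S hS)
    rw [ge_iff_le, dCount, defic, sCount, hv, hq]
    push_cast
    nlinarith [hα.le, (Nat.cast_nonneg (eCount (⊤ : G.Subgraph) S) : (0:ℝ) ≤ _)]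
  · intro w hw hcomp
    have hwS : w ∉ S.verts := by
      have hwmem : w ∈ Set.univ \ S.verts := hw ▸ Set.mem_singleton w
      exact hwmem.2
    have hverts : S.verts = Set.univ \ {w} := by
      rw [← hw]
      ext x
      by_cases hx : x ∈ S.verts <;> simp [hx]
    have hv : vCount (⊤ : G.Subgraph) S = 1 := by
      rw [vCount, SimpleGraph.Subgraph.verts_top, hw, Set.ncard_singleton]
    have hdegw : degDel (⊤ : G.Subgraph) S w = (G.neighborSet w).ncard := by
      have hNS : S.neighborSet w = ∅ := by
        ext v
        simp only [SimpleGraph.Subgraph.mem_neighborSet, Set.mem_empty_iff_false, iff_false]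
        intro h
        exact hwS h.fst_mem
      rw [degDel, SimpleGraph.Subgraph.neighborSet_top, hNS, Set.diff_empty]
    have hq : qCount (⊤ : G.Subgraph) S + (G.neighborSet w).ncard
        = 2 * eCount (⊤ : G.Subgraph) S := by
      rw [← hdegw, ← hsum, qCount, hverts]
      have hset : Set.univ \ {w} = ((Finset.univ.erase w : Finset V) : Set V) := by
        ext x; simp [eq_comm]
      rw [hset, finsum_mem_coe_finset]
      exact Finset.sum_erase_add _ _ (Finset.mem_univ w)
    have hq' : (qCount (⊤ : G.Subgraph) S : ℝ) + ((G.neighborSet w).ncard : ℝ)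
        = 2 * (eCount (⊤ : G.Subgraph) S : ℝ) := by exact_mod_cast hq
    have hmul : α * ((qCount (⊤ : G.Subgraph) S : ℝ) + ((G.neighborSet w).ncard : ℝ))
        = α * (2 * (eCount (⊤ : G.Subgraph) S : ℝ)) := by rw [hq']
    rw [ge_iff_le, dCount, defic, sCount, hv, hcomp]
    push_cast
    nlinarith [hmul]
end
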